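/- arXiv:2603.19073 — 2 statements merged into one kernel-verified Lean document; each statement's English description precedes it below -/
import Mathlib

section
/- Let v be a zero-mean subgaussian random vector in R^n with variance proxy R ⪰ 0 (i.e., E[exp(u^T v)] ≤ exp(½ ‖u‖²_R) for all u ∈ R^n). Then for any positive definite matrix H and any vector x ∈ R^n, one has (det(H+R))^{-1/2} · E[exp(½ ‖x+v‖²_{(H+R)^{-1}})] ≤ (det H)^{-1/2} · exp(½ ‖x‖²_{H^{-1}}). -/
open Matrix MeasureTheory

open Real

lemma gauss1d_integrable (b : ℝ) :
    Integrable fun t : ℝ => Real.exp (b * t - t ^ 2 / 2) := by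
  have h : ∀ t : ℝ, b * t - t ^ 2 / 2 = -(1/2) * (t - b) ^ 2 + b ^ 2 / 2 := by
    intro t; ring
  simp_rw [h, Real.exp_add]
  apply Integrable.mul_const
  have := (integrable_exp_neg_mul_sq (by norm_num : (0:ℝ) < 1/2)).comp_sub_right b
  simpa [neg_mul] using this

lemma gauss1d (b : ℝ) :
    ∫ t : ℝ, Real.exp (b * t - t ^ 2 / 2) = Real.sqrt (2 * π) * Real.exp (b ^ 2 / 2) := by
  have h : ∀ t : ℝ, b * t - t ^ 2 / 2 = -(1/2) * (t - b) ^ 2 + b ^ 2 / 2 := by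
    intro t; ring
  simp_rw [h, Real.exp_add]
  rw [MeasureTheory.integral_mul_const, integral_sub_right_eq_self (fun t => Real.exp (-(1/2) * t ^ 2)) b,
    integral_gaussian]
  norm_num
  ring

lemma gaussN_integrable {n : ℕ} (b : Fin n → ℝ) :
    Integrable fun w : Fin n → ℝ => Real.exp (b ⬝ᵥ w - w ⬝ᵥ w / 2) := by
  have h : ∀ w : Fin n → ℝ, b ⬝ᵥ w - w ⬝ᵥ w / 2 = ∑ i, (b i * w i - (w i) ^ 2 / 2) := by
    intro w
    simp [dotProduct, Finset.sum_sub_distrib, ← Finset.sum_div]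
    ring_nf
  simp_rw [h, Real.exp_sum]
  exact Integrable.fintype_prod (f := fun i (t : ℝ) => Real.exp (b i * t - t ^ 2 / 2))
    (fun i => gauss1d_integrable (b i))

lemma gaussN {n : ℕ} (b : Fin n → ℝ) :
    ∫ w : Fin n → ℝ, Real.exp (b ⬝ᵥ w - w ⬝ᵥ w / 2)
      = (Real.sqrt (2 * π)) ^ n * Real.exp (b ⬝ᵥ b / 2) := by
  have h : ∀ w : Fin n → ℝ, b ⬝ᵥ w - w ⬝ᵥ w / 2 = ∑ i, (b i * w i - (w i) ^ 2 / 2) := by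
    intro w
    simp [dotProduct, Finset.sum_sub_distrib, ← Finset.sum_div]
    ring_nf
  simp_rw [h, Real.exp_sum]
  rw [MeasureTheory.integral_fintype_prod_volume_eq_prod
    (f := fun i (t : ℝ) => Real.exp (b i * t - t ^ 2 / 2))]
  simp_rw [gauss1d]
  rw [Finset.prod_mul_distrib, Finset.prod_const, ← Real.exp_sum]
  congr 1
  · simp
  · congr 1
    simp [dotProduct, ← Finset.sum_div, sq]

lemma dot_mulVec_symm {n : ℕ} {A : Matrix (Fin n) (Fin n) ℝ} (hA : Aᵀ = A)
    (y w : Fin n → ℝ) : (A.mulVec y) ⬝ᵥ w = y ⬝ᵥ (A.mulVec w) := by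
  rw [dotProduct_comm, Matrix.dotProduct_mulVec, ← Matrix.mulVec_transpose, hA,
    dotProduct_comm]

lemma quad_bound {n : ℕ} {M : Matrix (Fin n) (Fin n) ℝ} (hM : M.PosDef)
    (z u : Fin n → ℝ) :
    z ⬝ᵥ u - (1 / 2) * (u ⬝ᵥ M.mulVec u) ≤ (1 / 2) * (z ⬝ᵥ M⁻¹.mulVec z) := by
  have hsym : Mᵀ = M := by
    have := hM.isHermitian
    simpa [Matrix.IsHermitian, Matrix.conjTranspose_eq_transpose_of_trivial] using this
  set y := M⁻¹.mulVec z with hy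
  have hMy : M.mulVec y = z := by
    rw [hy, Matrix.mulVec_mulVec, Matrix.mul_nonsing_inv _ hM.det_pos.ne'.isUnit, Matrix.one_mulVec]
  have h0 : 0 ≤ (u - y) ⬝ᵥ M.mulVec (u - y) := by
    have := hM.posSemidef.dotProduct_mulVec_nonneg (u - y)
    simpa using this
  have hexp : (u - y) ⬝ᵥ M.mulVec (u - y)
      = u ⬝ᵥ M.mulVec u - 2 * (z ⬝ᵥ u) + z ⬝ᵥ M⁻¹.mulVec z := by
    have h1 : M.mulVec (u - y) = M.mulVec u - z := by
      rw [Matrix.mulVec_sub, hMy]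
    rw [h1, sub_dotProduct, dotProduct_sub, dotProduct_sub]
    have h2 : y ⬝ᵥ M.mulVec u = z ⬝ᵥ u := by
      rw [← dot_mulVec_symm hsym, hMy]
    have h3 : u ⬝ᵥ z = z ⬝ᵥ u := dotProduct_comm _ _
    have h4 : y ⬝ᵥ z = z ⬝ᵥ M⁻¹.mulVec z := by
      rw [hy, dotProduct_comm]
    rw [h2, h3, h4]; ring
  linarith [h0, hexp.symm.le]

open scoped MatrixOrder in
lemma gaussL {n : ℕ} {M : Matrix (Fin n) (Fin n) ℝ} (hM : M.PosDef) (z : Fin n → ℝ) :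
    ∫⁻ u : Fin n → ℝ, ENNReal.ofReal (Real.exp (z ⬝ᵥ u - (1 / 2) * (u ⬝ᵥ M.mulVec u)))
      = ENNReal.ofReal ((Real.sqrt (2 * π)) ^ n / Real.sqrt M.det
          * Real.exp ((1 / 2) * (z ⬝ᵥ M⁻¹.mulVec z))) := by
  classical
  set S := CFC.sqrt M with hSdef
  have hS : S.PosSemidef := Matrix.nonneg_iff_posSemidef.mp (CFC.sqrt_nonneg M)
  have hSS : S * S = M := CFC.sqrt_mul_sqrt_self M hM.posSemidef.nonneg
  have hSsym : Sᵀ = S := by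
    simpa [Matrix.IsHermitian, Matrix.conjTranspose_eq_transpose_of_trivial] using hS.1
  have detS_nonneg : 0 ≤ S.det := by
    rw [hS.1.det_eq_prod_eigenvalues]
    exact Finset.prod_nonneg fun i _ => hS.eigenvalues_nonneg i
  have detS_sq : S.det * S.det = M.det := by rw [← Matrix.det_mul, hSS]
  have detM_pos : 0 < M.det := hM.det_pos
  have detS_pos : 0 < S.det := by
    rcases detS_nonneg.lt_or_eq with h | h
    · exact h
    · exfalso; rw [← h] at detS_sq; simp at detS_sq; linarith [detS_sq ▸ detM_pos]
  have detS_eq : S.det = Real.sqrt M.det := by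
    rw [← detS_sq, Real.sqrt_mul_self detS_nonneg]
  have hdetS_ne : S.det ≠ 0 := detS_pos.ne'
  have hSinv_sym : S⁻¹ᵀ = S⁻¹ := by rw [Matrix.transpose_nonsing_inv, hSsym]
  have hdetSi : S⁻¹.det = S.det⁻¹ := by
    simp [Matrix.det_nonsing_inv, Ring.inverse_eq_inv']
  have hdetSi_ne : S⁻¹.det ≠ 0 := by rw [hdetSi]; exact inv_ne_zero hdetS_ne
  set b := S⁻¹.mulVec z with hb
  have h1 : S⁻¹ * M * S⁻¹ = 1 := by
    rw [← hSS]
    simp only [← mul_assoc]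
    rw [Matrix.nonsing_inv_mul _ hdetS_ne.isUnit, one_mul, Matrix.mul_nonsing_inv _ hdetS_ne.isUnit]
  have hkey : ∀ w : Fin n → ℝ,
      z ⬝ᵥ (S⁻¹.mulVec w) - (1 / 2) * ((S⁻¹.mulVec w) ⬝ᵥ M.mulVec (S⁻¹.mulVec w))
        = b ⬝ᵥ w - w ⬝ᵥ w / 2 := by
    intro w
    have e1 : z ⬝ᵥ (S⁻¹.mulVec w) = b ⬝ᵥ w := (dot_mulVec_symm hSinv_sym z w).symm
    have e2 : (S⁻¹.mulVec w) ⬝ᵥ M.mulVec (S⁻¹.mulVec w) = w ⬝ᵥ w := by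
      rw [dot_mulVec_symm hSinv_sym w, Matrix.mulVec_mulVec, Matrix.mulVec_mulVec,
        h1, Matrix.one_mulVec]
    rw [e1, e2]; ring
  have hbb : b ⬝ᵥ b = z ⬝ᵥ M⁻¹.mulVec z := by
    rw [hb, dot_mulVec_symm hSinv_sym, Matrix.mulVec_mulVec, ← hSS, Matrix.mul_inv_rev]
  have hcont : Continuous fun y : Fin n → ℝ =>
      Real.exp (z ⬝ᵥ y - (1 / 2) * (y ⬝ᵥ M.mulVec y)) := by
    have c1 : Continuous fun y : Fin n → ℝ => z ⬝ᵥ y :=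
      continuous_const.dotProduct continuous_id
    have c2 : Continuous fun y : Fin n → ℝ => y ⬝ᵥ M.mulVec y :=
      continuous_id.dotProduct (continuous_const.matrix_mulVec continuous_id)
    exact (c1.sub (continuous_const.mul c2)).rexp
  have hgm : Measurable fun y : Fin n → ℝ =>
      ENNReal.ofReal (Real.exp (z ⬝ᵥ y - (1 / 2) * (y ⬝ᵥ M.mulVec y))) :=
    hcont.measurable.ennreal_ofReal
  have hTmeas : Measurable (Matrix.toLin' (S⁻¹ : Matrix (Fin n) (Fin n) ℝ)) :=
    (LinearMap.continuous_on_pi _).measurable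
  have hmap := Real.map_matrix_volume_pi_eq_smul_volume_pi (M := S⁻¹) hdetSi_ne
  set I := ∫⁻ u : Fin n → ℝ,
      ENNReal.ofReal (Real.exp (z ⬝ᵥ u - (1 / 2) * (u ⬝ᵥ M.mulVec u))) with hI
  have habs : ENNReal.ofReal |S⁻¹.det⁻¹| = ENNReal.ofReal S.det := by
    rw [hdetSi, inv_inv, abs_of_pos detS_pos]
  have main : ENNReal.ofReal ((Real.sqrt (2 * π)) ^ n * Real.exp (b ⬝ᵥ b / 2))
      = ENNReal.ofReal S.det * I := by
    calc ENNReal.ofReal ((Real.sqrt (2 * π)) ^ n * Real.exp (b ⬝ᵥ b / 2))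
        = ∫⁻ w : Fin n → ℝ, ENNReal.ofReal (Real.exp (b ⬝ᵥ w - w ⬝ᵥ w / 2)) := by
          rw [← MeasureTheory.ofReal_integral_eq_lintegral_ofReal (gaussN_integrable b)
            (ae_of_all _ fun w => (Real.exp_pos _).le), gaussN]
      _ = ∫⁻ w : Fin n → ℝ, ENNReal.ofReal
            (Real.exp (z ⬝ᵥ (Matrix.toLin' S⁻¹ w) - (1 / 2) *
              ((Matrix.toLin' S⁻¹ w) ⬝ᵥ M.mulVec (Matrix.toLin' S⁻¹ w)))) := by
          congr 1; funext w
          rw [Matrix.toLin'_apply, hkey w]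
      _ = ∫⁻ y, ENNReal.ofReal (Real.exp (z ⬝ᵥ y - (1 / 2) * (y ⬝ᵥ M.mulVec y)))
            ∂(Measure.map (Matrix.toLin' S⁻¹) volume) := (lintegral_map hgm hTmeas).symm
      _ = ENNReal.ofReal S.det * I := by
          rw [hmap, lintegral_smul_measure, habs, hI, smul_eq_mul]
  have Sinv_nonneg : (0:ℝ) ≤ S.det⁻¹ := (inv_pos.2 detS_pos).le
  have := congrArg (fun t => ENNReal.ofReal S.det⁻¹ * t) main
  rw [← ENNReal.ofReal_mul Sinv_nonneg, ← mul_assoc (ENNReal.ofReal S.det⁻¹),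
    ← ENNReal.ofReal_mul Sinv_nonneg, inv_mul_cancel₀ hdetS_ne, ENNReal.ofReal_one,
    one_mul] at this
  rw [← this]
  congr 1
  rw [hbb, detS_eq]
  field_simp

/-- concentration inequality for subgaussian vectors (Lemma 3 of the paper). -/
theorem stmt0 {Ω : Type*} {mΩ : MeasurableSpace Ω} (μ : Measure Ω) [IsProbabilityMeasure μ]
    {n : ℕ} (v : Ω → Fin n → ℝ) (hv : Measurable v)
    (R : Matrix (Fin n) (Fin n) ℝ) (hR : R.PosSemidef)
    (hsub : ∀ u : Fin n → ℝ,
      ∫ ω, Real.exp (u ⬝ᵥ v ω) ∂μ ≤ Real.exp ((1 / 2) * (u ⬝ᵥ R.mulVec u)))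
    (H : Matrix (Fin n) (Fin n) ℝ) (hH : H.PosDef) (x : Fin n → ℝ) :
    (Real.sqrt (H + R).det)⁻¹ *
        ∫ ω, Real.exp ((1 / 2) * ((x + v ω) ⬝ᵥ (H + R)⁻¹.mulVec (x + v ω))) ∂μ ≤
      (Real.sqrt H.det)⁻¹ * Real.exp ((1 / 2) * (x ⬝ᵥ H⁻¹.mulVec x)) := by
  classical
  set M := H + R with hMdef
  have hM : M.PosDef := hH.add_posSemidef hR
  set c := (Real.sqrt (2 * π)) ^ n with hcdef
  have hc : 0 < c := by positivity
  set dM := Real.sqrt M.det with hdMdef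
  set dH := Real.sqrt H.det with hdHdef
  have hdM : 0 < dM := Real.sqrt_pos.2 hM.det_pos
  have hdH : 0 < dH := Real.sqrt_pos.2 hH.det_pos
  set e := Real.exp ((1 / 2) * (x ⬝ᵥ H⁻¹.mulVec x)) with hedef
  have he : 0 < e := Real.exp_pos _
  -- continuity / measurability of the integrand
  have φcont : Continuous fun y : Fin n → ℝ =>
      Real.exp ((1 / 2) * ((x + y) ⬝ᵥ M⁻¹.mulVec (x + y))) := by
    have c2 : Continuous fun y : Fin n → ℝ => (x + y) ⬝ᵥ M⁻¹.mulVec (x + y) :=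
      (continuous_const.add continuous_id).dotProduct
        (continuous_const.matrix_mulVec (continuous_const.add continuous_id))
    exact (continuous_const.mul c2).rexp
  have hφv : Measurable fun ω => Real.exp ((1 / 2) * ((x + v ω) ⬝ᵥ M⁻¹.mulVec (x + v ω))) :=
    φcont.measurable.comp hv
  set J := ∫⁻ ω, ENNReal.ofReal
      (Real.exp ((1 / 2) * ((x + v ω) ⬝ᵥ M⁻¹.mulVec (x + v ω)))) ∂μ with hJdef
  have hInt : ∫ ω, Real.exp ((1 / 2) * ((x + v ω) ⬝ᵥ M⁻¹.mulVec (x + v ω))) ∂μ = J.toReal :=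
    integral_eq_lintegral_of_nonneg_ae (ae_of_all _ fun ω => (Real.exp_pos _).le)
      hφv.aestronglyMeasurable
  rw [hInt]
  rcases eq_or_ne J ⊤ with hJ | hJ
  · rw [hJ]
    simp only [ENNReal.toReal_top, mul_zero]
    positivity
  -- main case : J finite
  · have hφint : Integrable
        (fun ω => Real.exp ((1 / 2) * ((x + v ω) ⬝ᵥ M⁻¹.mulVec (x + v ω)))) μ := by
      refine ⟨hφv.aestronglyMeasurable, ?_⟩
      rw [hasFiniteIntegral_iff_ofReal (ae_of_all _ fun ω => (Real.exp_pos _).le)]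
      exact hJ.lt_top
    have hK : ∀ u : Fin n → ℝ, Integrable (fun ω => Real.exp (u ⬝ᵥ v ω)) μ := by
      intro u
      refine Integrable.mono'
        (hφint.const_mul (Real.exp ((1 / 2) * (u ⬝ᵥ M.mulVec u) - u ⬝ᵥ x)))
        (((continuous_const.dotProduct continuous_id).rexp.measurable.comp
          hv).aestronglyMeasurable) (ae_of_all _ fun ω => ?_)
      rw [Real.norm_eq_abs, abs_of_pos (Real.exp_pos _), ← Real.exp_add]
      apply Real.exp_le_exp.2
      have hq := quad_bound hM (x + v ω) u
      have h1 : (x + v ω) ⬝ᵥ u = x ⬝ᵥ u + v ω ⬝ᵥ u := add_dotProduct _ _ _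
      have h2 : u ⬝ᵥ v ω = v ω ⬝ᵥ u := dotProduct_comm _ _
      have h3 : u ⬝ᵥ x = x ⬝ᵥ u := dotProduct_comm _ _
      rw [h2, h3] at *
      linarith [hq, h1]
    have hsub' : ∀ u : Fin n → ℝ,
        (∫⁻ ω, ENNReal.ofReal (Real.exp (u ⬝ᵥ v ω)) ∂μ)
          ≤ ENNReal.ofReal (Real.exp ((1 / 2) * (u ⬝ᵥ R.mulVec u))) := by
      intro u
      rw [← MeasureTheory.ofReal_integral_eq_lintegral_ofReal (hK u)
        (ae_of_all _ fun ω => (Real.exp_pos _).le)]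
      exact ENNReal.ofReal_le_ofReal (hsub u)
    -- rewrite J via the Gaussian identity
    have hdMc : (0:ℝ) ≤ dM / c := by positivity
    have hsplit : ∀ ω, ENNReal.ofReal
          (Real.exp ((1 / 2) * ((x + v ω) ⬝ᵥ M⁻¹.mulVec (x + v ω))))
        = ENNReal.ofReal (dM / c) * ∫⁻ u : Fin n → ℝ, ENNReal.ofReal
            (Real.exp ((x + v ω) ⬝ᵥ u - (1 / 2) * (u ⬝ᵥ M.mulVec u))) := by
      intro ω
      rw [gaussL hM (x + v ω), ← ENNReal.ofReal_mul hdMc]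
      congr 1
      rw [hdMdef, hcdef]
      field_simp
      rw [div_self (Real.sqrt_pos.2 hM.det_pos).ne']
    have hJeq : J = ENNReal.ofReal (dM / c) * ∫⁻ ω, (∫⁻ u : Fin n → ℝ, ENNReal.ofReal
        (Real.exp ((x + v ω) ⬝ᵥ u - (1 / 2) * (u ⬝ᵥ M.mulVec u)))) ∂μ := by
      rw [hJdef]
      simp_rw [hsplit]
      rw [lintegral_const_mul' _ _ ENNReal.ofReal_ne_top]
    -- swap the integrals
    have hGmeas : Measurable (Function.uncurry fun ω (u : Fin n → ℝ) => ENNReal.ofReal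
        (Real.exp ((x + v ω) ⬝ᵥ u - (1 / 2) * (u ⬝ᵥ M.mulVec u)))) := by
      have d1 : Continuous fun q : (Fin n → ℝ) × (Fin n → ℝ) =>
          Real.exp ((x + q.1) ⬝ᵥ q.2 - (1 / 2) * (q.2 ⬝ᵥ M.mulVec q.2)) := by
        have e1 : Continuous fun q : (Fin n → ℝ) × (Fin n → ℝ) => (x + q.1) ⬝ᵥ q.2 :=
          (continuous_const.add continuous_fst).dotProduct continuous_snd
        have e2 : Continuous fun q : (Fin n → ℝ) × (Fin n → ℝ) => q.2 ⬝ᵥ M.mulVec q.2 :=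
          continuous_snd.dotProduct (continuous_const.matrix_mulVec continuous_snd)
        exact (e1.sub (continuous_const.mul e2)).rexp
      have hvp : Measurable fun p : Ω × (Fin n → ℝ) => ((v p.1, p.2) :
          (Fin n → ℝ) × (Fin n → ℝ)) := (hv.comp measurable_fst).prodMk measurable_snd
      exact (d1.measurable.comp hvp).ennreal_ofReal
    have hswap : ∫⁻ ω, (∫⁻ u : Fin n → ℝ, ENNReal.ofReal
          (Real.exp ((x + v ω) ⬝ᵥ u - (1 / 2) * (u ⬝ᵥ M.mulVec u)))) ∂μ
        = ∫⁻ u : Fin n → ℝ, (∫⁻ ω, ENNReal.ofReal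
          (Real.exp ((x + v ω) ⬝ᵥ u - (1 / 2) * (u ⬝ᵥ M.mulVec u))) ∂μ) :=
      lintegral_lintegral_swap hGmeas.aemeasurable
    -- bound the inner integral
    have hinner : ∀ u : Fin n → ℝ,
        (∫⁻ ω, ENNReal.ofReal
          (Real.exp ((x + v ω) ⬝ᵥ u - (1 / 2) * (u ⬝ᵥ M.mulVec u))) ∂μ)
        ≤ ENNReal.ofReal (Real.exp (x ⬝ᵥ u - (1 / 2) * (u ⬝ᵥ H.mulVec u))) := by
      intro u
      have hsplit2 : ∀ ω, ENNReal.ofReal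
            (Real.exp ((x + v ω) ⬝ᵥ u - (1 / 2) * (u ⬝ᵥ M.mulVec u)))
          = ENNReal.ofReal (Real.exp (x ⬝ᵥ u - (1 / 2) * (u ⬝ᵥ M.mulVec u)))
            * ENNReal.ofReal (Real.exp (u ⬝ᵥ v ω)) := by
        intro ω
        rw [← ENNReal.ofReal_mul (Real.exp_pos _).le, ← Real.exp_add]
        congr 2
        rw [add_dotProduct, dotProduct_comm (v ω) u]
        ring
      simp_rw [hsplit2]
      rw [lintegral_const_mul' _ _ ENNReal.ofReal_ne_top]
      calc ENNReal.ofReal (Real.exp (x ⬝ᵥ u - (1 / 2) * (u ⬝ᵥ M.mulVec u)))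
            * ∫⁻ ω, ENNReal.ofReal (Real.exp (u ⬝ᵥ v ω)) ∂μ
          ≤ ENNReal.ofReal (Real.exp (x ⬝ᵥ u - (1 / 2) * (u ⬝ᵥ M.mulVec u)))
            * ENNReal.ofReal (Real.exp ((1 / 2) * (u ⬝ᵥ R.mulVec u))) :=
            mul_le_mul_right (hsub' u) _
        _ = ENNReal.ofReal (Real.exp (x ⬝ᵥ u - (1 / 2) * (u ⬝ᵥ H.mulVec u))) := by
            rw [← ENNReal.ofReal_mul (Real.exp_pos _).le, ← Real.exp_add]
            congr 2
            rw [hMdef, Matrix.add_mulVec, dotProduct_add]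
            ring
    -- final bound on J
    have hJle : J ≤ ENNReal.ofReal (dM / dH * e) := by
      rw [hJeq, hswap]
      calc ENNReal.ofReal (dM / c) * ∫⁻ u : Fin n → ℝ, (∫⁻ ω, ENNReal.ofReal
            (Real.exp ((x + v ω) ⬝ᵥ u - (1 / 2) * (u ⬝ᵥ M.mulVec u))) ∂μ)
          ≤ ENNReal.ofReal (dM / c) * ∫⁻ u : Fin n → ℝ, ENNReal.ofReal
            (Real.exp (x ⬝ᵥ u - (1 / 2) * (u ⬝ᵥ H.mulVec u))) :=
            mul_le_mul_right (lintegral_mono hinner) _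
        _ = ENNReal.ofReal (dM / dH * e) := by
            rw [gaussL hH x, ← ENNReal.ofReal_mul hdMc]
            congr 1
            rw [hedef, hdHdef, hdMdef, hcdef]
            field_simp
    have hfinal : J.toReal ≤ dM / dH * e :=
      ENNReal.toReal_le_of_le_ofReal (by positivity) hJle
    calc dM⁻¹ * J.toReal ≤ dM⁻¹ * (dM / dH * e) := by
          exact mul_le_mul_of_nonneg_left hfinal (by positivity)
      _ = dH⁻¹ * e := by field_simp
end

section
/- Let w ∈ R^m be a zero-mean random vector satisfying ‖w‖_W ≤ c almost surely for a positive definite matrix W and constant c > 0. Then w is subgaussian with variance proxy c²·W^{-1}, i.e., E[exp(u^T w)] ≤ exp(½ c² u^T W^{-1} u) for all u ∈ R^m. -/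
open Matrix MeasureTheory

lemma symm_dot' {m : ℕ} {W : Matrix (Fin m) (Fin m) ℝ} (h : W.IsHermitian)
    (a b : Fin m → ℝ) : a ⬝ᵥ W *ᵥ b = b ⬝ᵥ W *ᵥ a := by
  have ht : Wᵀ = W := by rw [← conjTranspose_eq_transpose_of_trivial, h.eq]
  rw [dotProduct_mulVec b W a, ← mulVec_transpose, ht, dotProduct_comm]

lemma posdef_dot_pos {m : ℕ} {W : Matrix (Fin m) (Fin m) ℝ} (hW : W.PosDef)
    {x : Fin m → ℝ} (hx : x ≠ 0) : 0 < x ⬝ᵥ W *ᵥ x := by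
  simpa using hW.re_dotProduct_pos hx

lemma posdef_dot_nonneg {m : ℕ} {W : Matrix (Fin m) (Fin m) ℝ} (hW : W.PosDef)
    (x : Fin m → ℝ) : 0 ≤ x ⬝ᵥ W *ᵥ x := by
  by_cases hx : x = 0
  · simp [hx]
  · exact (posdef_dot_pos hW hx).le

lemma posdef_cs {m : ℕ} {W : Matrix (Fin m) (Fin m) ℝ} (hW : W.PosDef)
    (x y : Fin m → ℝ) : (x ⬝ᵥ W *ᵥ y) ^ 2 ≤ (x ⬝ᵥ W *ᵥ x) * (y ⬝ᵥ W *ᵥ y) := by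
  have key : ∀ t : ℝ,
      0 ≤ (y ⬝ᵥ W *ᵥ y) * (t * t) + (2 * (x ⬝ᵥ W *ᵥ y)) * t + (x ⬝ᵥ W *ᵥ x) := by
    intro t
    have h0 := posdef_dot_nonneg hW (x + t • y)
    have hyx : y ⬝ᵥ W *ᵥ x = x ⬝ᵥ W *ᵥ y := symm_dot' hW.isHermitian y x
    simp only [mulVec_add, mulVec_smul, add_dotProduct, dotProduct_add, smul_dotProduct,
      dotProduct_smul, smul_eq_mul, hyx] at h0
    nlinarith [h0]
  have hd := discrim_le_zero key
  rw [discrim] at hd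
  nlinarith [hd]

lemma dot_abs_le {m : ℕ} {W : Matrix (Fin m) (Fin m) ℝ} (hW : W.PosDef)
    (v y : Fin m → ℝ) :
    |v ⬝ᵥ y| ≤ Real.sqrt (v ⬝ᵥ W⁻¹ *ᵥ v) * Real.sqrt (y ⬝ᵥ W *ᵥ y) := by
  have hinv := hW.inv
  have hWu : IsUnit W.det := hW.det_pos.ne'.isUnit
  have h1 : (W⁻¹ *ᵥ v) ⬝ᵥ (W *ᵥ y) = v ⬝ᵥ y := by
    rw [dotProduct_comm, symm_dot' hinv.isHermitian, mulVec_mulVec,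
      Matrix.nonsing_inv_mul _ hWu, one_mulVec]
  have h2 : (W⁻¹ *ᵥ v) ⬝ᵥ (W *ᵥ (W⁻¹ *ᵥ v)) = v ⬝ᵥ W⁻¹ *ᵥ v := by
    rw [mulVec_mulVec, Matrix.mul_nonsing_inv _ hWu, one_mulVec, dotProduct_comm]
  have hcs := posdef_cs hW (W⁻¹ *ᵥ v) y
  rw [h1, h2] at hcs
  have habs : |v ⬝ᵥ y| = Real.sqrt ((v ⬝ᵥ y) ^ 2) := (Real.sqrt_sq_eq_abs _).symm
  rw [habs, ← Real.sqrt_mul (posdef_dot_nonneg hinv v)]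
  exact Real.sqrt_le_sqrt hcs

/-- Pointwise convexity bound: for `|x| ≤ b`, `exp x ≤ cosh b + x * sinh b / b`. -/
lemma exp_le_cosh_add {b x : ℝ} (hb : 0 < b) (hx : |x| ≤ b) :
    Real.exp x ≤ Real.cosh b + x * (Real.sinh b / b) := by
  obtain ⟨hx1, hx2⟩ := abs_le.mp hx
  have ha : (0:ℝ) ≤ (b - x) / (2 * b) := by
    apply div_nonneg <;> linarith
  have hbnn : (0:ℝ) ≤ (b + x) / (2 * b) := by
    apply div_nonneg <;> linarith
  have hab : (b - x) / (2 * b) + (b + x) / (2 * b) = 1 := by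
    field_simp
    ring
  have h := convexOn_exp.2 (Set.mem_univ (-b)) (Set.mem_univ b) ha hbnn hab
  simp only [smul_eq_mul] at h
  have harg : (b - x) / (2 * b) * (-b) + (b + x) / (2 * b) * b = x := by
    field_simp
    ring
  rw [harg] at h
  refine h.trans (le_of_eq ?_)
  rw [Real.cosh_eq, Real.sinh_eq]
  field_simp
  ring

/-- Scalar Hoeffding-type bound via `cosh`. -/
lemma scalar_hoeffding {Ω : Type*} [MeasurableSpace Ω] (μ : Measure Ω)
    [IsProbabilityMeasure μ] (X : Ω → ℝ) (hX : Measurable X) {b : ℝ} (hb : 0 < b)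
    (hmean : ∫ ω, X ω ∂μ = 0) (hbd : ∀ᵐ ω ∂μ, |X ω| ≤ b) :
    ∫ ω, Real.exp (X ω) ∂μ ≤ Real.exp (b ^ 2 / 2) := by
  have hXint : Integrable X μ := by
    refine (integrable_const b).mono' hX.aestronglyMeasurable ?_
    filter_upwards [hbd] with ω h using by simpa using h
  have hexpint : Integrable (fun ω => Real.exp (X ω)) μ := by
    refine (integrable_const (Real.exp b)).mono' (hX.exp).aestronglyMeasurable ?_
    filter_upwards [hbd] with ω h
    rw [Real.norm_eq_abs, abs_of_pos (Real.exp_pos _)]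
    exact Real.exp_le_exp.mpr ((le_abs_self _).trans h)
  have hmono : ∫ ω, Real.exp (X ω) ∂μ ≤
      ∫ ω, (Real.cosh b + X ω * (Real.sinh b / b)) ∂μ := by
    refine integral_mono_ae hexpint ((integrable_const _).add (hXint.mul_const _)) ?_
    filter_upwards [hbd] with ω h using exp_le_cosh_add hb h
  have hcalc : ∫ ω, (Real.cosh b + X ω * (Real.sinh b / b)) ∂μ = Real.cosh b := by
    rw [integral_add (integrable_const _) (hXint.mul_const _), integral_const,
      integral_mul_const, hmean]
    simp
  rw [hcalc] at hmono
  exact hmono.trans (by simpa using Real.cosh_le_exp_half_sq b)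

/-- zero-mean vectors bounded in the `W`-norm are subgaussian with proxy `c² W⁻¹`. -/
theorem stmt6 {Ω : Type*} {mΩ : MeasurableSpace Ω} (μ : Measure Ω) [IsProbabilityMeasure μ]
    {m : ℕ} (w : Ω → Fin m → ℝ) (hw : Measurable w)
    (W : Matrix (Fin m) (Fin m) ℝ) (hW : W.PosDef) (c : ℝ) (hc : 0 < c)
    (hmean : ∀ i, ∫ ω, w ω i ∂μ = 0)
    (hbound : ∀ᵐ ω ∂μ, Real.sqrt (w ω ⬝ᵥ W.mulVec (w ω)) ≤ c) :
    ∀ u : Fin m → ℝ,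
      ∫ ω, Real.exp (u ⬝ᵥ w ω) ∂μ ≤
        Real.exp ((1 / 2) * c ^ 2 * (u ⬝ᵥ W⁻¹.mulVec u)) := by
  intro u
  by_cases hu : u = 0
  · simp [hu]
  have hwm : ∀ i, Measurable fun ω => w ω i := fun i => (measurable_pi_apply i).comp hw
  have hwi : ∀ i, Integrable (fun ω => w ω i) μ := by
    intro i
    refine (integrable_const (Real.sqrt (Pi.single i 1 ⬝ᵥ W⁻¹ *ᵥ Pi.single i 1) * c)).mono'
      (hwm i).aestronglyMeasurable ?_
    filter_upwards [hbound] with ω h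
    have hle := dot_abs_le hW (Pi.single i 1) (w ω)
    rw [single_dotProduct, one_mul] at hle
    rw [Real.norm_eq_abs]
    exact hle.trans (mul_le_mul_of_nonneg_left h (Real.sqrt_nonneg _))
  have hXm : Measurable fun ω => u ⬝ᵥ w ω := by
    show Measurable fun ω => ∑ i, u i * w ω i
    exact Finset.measurable_sum _ fun i _ => measurable_const.mul (hwm i)
  have hXmean : ∫ ω, u ⬝ᵥ w ω ∂μ = 0 := by
    show ∫ ω, ∑ i, u i * w ω i ∂μ = 0
    rw [integral_finset_sum _ fun i _ => (hwi i).const_mul (u i)]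
    simp [integral_const_mul, hmean]
  have hq : 0 < u ⬝ᵥ W⁻¹ *ᵥ u := posdef_dot_pos hW.inv hu
  have hb : 0 < c * Real.sqrt (u ⬝ᵥ W⁻¹ *ᵥ u) := mul_pos hc (Real.sqrt_pos.mpr hq)
  have hbd : ∀ᵐ ω ∂μ, |u ⬝ᵥ w ω| ≤ c * Real.sqrt (u ⬝ᵥ W⁻¹ *ᵥ u) := by
    filter_upwards [hbound] with ω h
    refine (dot_abs_le hW u (w ω)).trans ?_
    rw [mul_comm c]
    exact mul_le_mul_of_nonneg_left h (Real.sqrt_nonneg _)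
  have hmain := scalar_hoeffding μ _ hXm hb hXmean hbd
  refine hmain.trans (le_of_eq ?_)
  congr 1
  rw [mul_pow, Real.sq_sqrt hq.le]
  ring
end
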